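/- arXiv:1811.12138 — 2 statements merged into one kernel-verified Lean document; each statement's English description precedes it below -/
import Mathlib

section
/- Let G be a simple graph on n vertices with largest adjacency eigenvalue λ₁. Equality EE(G) = e^{λ₁} + (n − 1) − λ₁ holds if and only if all eigenvalues of the adjacency matrix of G are zero, i.e., if and only if G is the empty graph (the complement of Kₙ, having no edges). -/
/-!
The adjacency matrix has trace zero, so the eigenvalues other than `λ₁` sum to `-λ₁`. Hence
`EE(G) - (e^{λ₁} + (n - 1) - λ₁) = ∑_{i ≠ 1} (e^{λᵢ} - 1 - λᵢ)`, a sum of terms that are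
nonnegative and vanish only at `λᵢ = 0`. Equality therefore forces `λᵢ = 0` for `i ≠ 1`, and then
`λ₁ = 0` by the trace. A symmetric matrix with zero spectrum is zero, i.e. `G` has no edges.
-/

/-- The adjacency matrix of a simple graph over `ℝ` is Hermitian. -/
theorem adjHerm {n : ℕ} (G : SimpleGraph (Fin n)) [DecidableRel G.Adj] :
    (G.adjMatrix ℝ).IsHermitian := by
  rw [Matrix.IsHermitian, Matrix.conjTranspose_eq_transpose_of_trivial]
  exact G.isSymm_adjMatrix

/-- The (real) eigenvalues of the adjacency matrix of `G`. -/
noncomputable def graphEigs {n : ℕ} (G : SimpleGraph (Fin n)) [DecidableRel G.Adj] :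
    Fin n → ℝ := (adjHerm G).eigenvalues

/-- The Estrada index `EE(G) = ∑ i, exp (λ i)`. -/
noncomputable def estradaIndex {n : ℕ} (G : SimpleGraph (Fin n)) [DecidableRel G.Adj] : ℝ :=
  ∑ i, Real.exp (graphEigs G i)


open Finset

theorem Finset.sum_exp_eq_card_add_sum_iff {ι : Type*} (s : Finset ι) (x : ι → ℝ) :
    ∑ i ∈ s, Real.exp (x i) = #s + ∑ i ∈ s, x i ↔ ∀ i ∈ s, x i = 0 := by
  have hgap : ∑ i ∈ s, Real.exp (x i) - (#s + ∑ i ∈ s, x i) =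
      ∑ i ∈ s, (Real.exp (x i) - (x i + 1)) := by
    rw [sum_sub_distrib, sum_add_distrib, sum_const, nsmul_one]
    ring
  have hnonneg : ∀ i ∈ s, 0 ≤ Real.exp (x i) - (x i + 1) := fun i _ ↦
    sub_nonneg.2 (Real.add_one_le_exp _)
  rw [← sub_eq_zero, hgap, sum_eq_zero_iff_of_nonneg hnonneg]
  refine forall₂_congr fun i _ ↦ ⟨fun h ↦ ?_, fun h ↦ by simp [h]⟩
  by_contra hne
  linarith [Real.add_one_lt_exp hne]

theorem sum_exp_eq_exp_add_card_sub_one_sub_iff {ι : Type*} [Fintype ι] [DecidableEq ι]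
    (x : ι → ℝ) (hx : ∑ i, x i = 0) (i₀ : ι) :
    ∑ i, Real.exp (x i) = Real.exp (x i₀) + ((Fintype.card ι : ℝ) - 1) - x i₀ ↔
      ∀ i, x i = 0 := by
  have hrest : ∑ i ∈ univ.erase i₀, x i = -x i₀ := by
    linarith [add_sum_erase univ x (mem_univ i₀)]
  have hcard : ((#(univ.erase i₀) : ℕ) : ℝ) = (Fintype.card ι : ℝ) - 1 := by
    rw [card_erase_of_mem (mem_univ i₀), card_univ,
      Nat.cast_sub (Fintype.card_pos_iff.2 ⟨i₀⟩), Nat.cast_one]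
  have hrhs : Real.exp (x i₀) + ((Fintype.card ι : ℝ) - 1) - x i₀ =
      Real.exp (x i₀) + (#(univ.erase i₀) + ∑ i ∈ univ.erase i₀, x i) := by
    rw [hcard, hrest]
    ring
  rw [hrhs, ← add_sum_erase univ _ (mem_univ i₀), add_right_inj, sum_exp_eq_card_add_sum_iff]
  refine ⟨fun h i ↦ ?_, fun h i _ ↦ h i⟩
  have hi₀ : x i₀ = 0 := by
    rw [← neg_eq_zero, ← hrest, sum_eq_zero h]
  by_cases hi : i = i₀
  · rwa [hi]
  · exact h i (mem_erase.2 ⟨hi, mem_univ i⟩)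

theorem SimpleGraph.adjMatrix_eq_zero_iff {V α : Type*} [Zero α] [One α] [NeZero (1 : α)]
    (G : SimpleGraph V) [DecidableRel G.Adj] : G.adjMatrix α = 0 ↔ G = ⊥ := by
  refine ⟨fun h ↦ ?_, fun h ↦ ?_⟩
  · ext v w
    simpa [adjMatrix_apply] using congrFun₂ h v w
  · subst h
    ext v w
    simp [adjMatrix_apply]

theorem sum_graphEigs_eq_zero {n : ℕ} (G : SimpleGraph (Fin n)) [DecidableRel G.Adj] :
    ∑ i, graphEigs G i = 0 := by
  have h := (adjHerm G).trace_eq_sum_eigenvalues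
  rw [G.trace_adjMatrix ℝ] at h
  exact_mod_cast h.symm

theorem graphEigs_eq_zero_iff {n : ℕ} (G : SimpleGraph (Fin n)) [DecidableRel G.Adj] :
    (∀ i, graphEigs G i = 0) ↔ G = ⊥ := by
  rw [← funext_iff, ← G.adjMatrix_eq_zero_iff (α := ℝ)]
  exact (adjHerm G).eigenvalues_eq_zero_iff

/-- Equality `EE(G) = e^{λ₁} + (n − 1) − λ₁` holds iff all adjacency
eigenvalues of `G` are zero, i.e. iff `G` is the empty graph. -/
theorem estrada_eq_iff_empty {n : ℕ} (G : SimpleGraph (Fin n)) [DecidableRel G.Adj]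
    (lam1 : ℝ) (hlam : IsGreatest (Set.range (graphEigs G)) lam1) :
    (estradaIndex G = Real.exp lam1 + ((n : ℝ) - 1) - lam1 ↔ ∀ i, graphEigs G i = 0) ∧
    (estradaIndex G = Real.exp lam1 + ((n : ℝ) - 1) - lam1 ↔ G = ⊥) := by
  obtain ⟨i₀, rfl⟩ := hlam.1
  have key := sum_exp_eq_exp_add_card_sub_one_sub_iff _ (sum_graphEigs_eq_zero G) i₀
  rw [Fintype.card_fin] at key
  exact ⟨key, key.trans (graphEigs_eq_zero_iff G)⟩
end

section
/- Let G be a connected simple graph with largest adjacency eigenvalue λ₁, and for each vertex i let d(i) be its degree and d₂(i) = Σ_{j adjacent to i} d(j) the number of walks of length 2 starting at i. Then λ₁ ≥ sqrt( (Σ_{i∈V(G)} d₂(i)²) / (Σ_{i∈V(G)} d(i)²) ). -/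
open Matrix Finset

theorem OrthonormalBasis.dotProduct_eq_sum_repr {ι κ : Type*} [Fintype ι] [Fintype κ]
    (b : OrthonormalBasis κ ℝ (EuclideanSpace ℝ ι)) (x y : ι → ℝ) :
    x ⬝ᵥ y = ∑ k, b.repr (WithLp.toLp 2 x) k * b.repr (WithLp.toLp 2 y) k := by
  have h := b.repr.inner_map_map (WithLp.toLp 2 x) (WithLp.toLp 2 y)
  simp only [EuclideanSpace.inner_eq_star_dotProduct, star_trivial] at h
  rw [dotProduct_comm, ← h, dotProduct_comm]
  rfl

theorem Matrix.abs_dotProduct_mulVec_le {ι : Type*} [Fintype ι] {A : Matrix ι ι ℝ}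
    (hA : ∀ i j, 0 ≤ A i j) (x y : ι → ℝ) : |x ⬝ᵥ A *ᵥ y| ≤ |x| ⬝ᵥ A *ᵥ |y| := by
  simp only [dotProduct, mulVec, Pi.abs_apply, mul_sum]
  refine (abs_sum_le_sum_abs _ _).trans <| sum_le_sum fun i _ =>
    (abs_sum_le_sum_abs _ _).trans_eq <| sum_congr rfl fun j _ => ?_
  rw [abs_mul, abs_mul, abs_of_nonneg (hA i j)]

namespace Matrix.IsHermitian

variable {ι : Type*} [Fintype ι] [DecidableEq ι] {A : Matrix ι ι ℝ} (hA : A.IsHermitian)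

theorem eigenvectorBasis_repr_mulVec (x : ι → ℝ) (i : ι) :
    hA.eigenvectorBasis.repr (WithLp.toLp 2 (A *ᵥ x)) i =
      hA.eigenvalues i * hA.eigenvectorBasis.repr (WithLp.toLp 2 x) i := by
  have hsymm (v : ι → ℝ) : v ᵥ* A = A *ᵥ v := by
    rw [← vecMul_transpose, (isHermitian_iff_isSymm.1 hA).eq]
  simp only [OrthonormalBasis.repr_apply_apply, EuclideanSpace.inner_eq_star_dotProduct,
    star_trivial]
  rw [dotProduct_comm, dotProduct_mulVec, hsymm, mulVec_eigenvectorBasis, smul_dotProduct,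
    smul_eq_mul, dotProduct_comm]

theorem dotProduct_mulVec_le {c : ℝ} (hc : ∀ i, hA.eigenvalues i ≤ c) (x : ι → ℝ) :
    x ⬝ᵥ A *ᵥ x ≤ c * (x ⬝ᵥ x) := by
  simp only [hA.eigenvectorBasis.dotProduct_eq_sum_repr, eigenvectorBasis_repr_mulVec, mul_sum]
  refine sum_le_sum fun i _ => ?_
  nlinarith [hc i, mul_self_nonneg (hA.eigenvectorBasis.repr (WithLp.toLp 2 x) i)]

theorem abs_eigenvalues_le_of_nonneg (hA₀ : ∀ i j, 0 ≤ A i j) {c : ℝ}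
    (hc : ∀ i, hA.eigenvalues i ≤ c) (j : ι) : |hA.eigenvalues j| ≤ c := by
  set v := (hA.eigenvectorBasis j).ofLp
  have hv : v ⬝ᵥ v = 1 := by
    have := real_inner_self_eq_norm_sq (hA.eigenvectorBasis j)
    rwa [hA.eigenvectorBasis.orthonormal.1 j, one_pow, EuclideanSpace.inner_eq_star_dotProduct,
      star_trivial] at this
  have habs : |v| ⬝ᵥ |v| = v ⬝ᵥ v := by
    simp only [dotProduct, Pi.abs_apply, abs_mul_abs_self]
  calc |hA.eigenvalues j| = |v ⬝ᵥ A *ᵥ v| := by simp [hA.eigenvalues_eq j, v]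
    _ ≤ |v| ⬝ᵥ A *ᵥ |v| := abs_dotProduct_mulVec_le hA₀ v v
    _ ≤ c * (|v| ⬝ᵥ |v|) := hA.dotProduct_mulVec_le hc |v|
    _ = c := by rw [habs, hv, mul_one]

theorem mulVec_dotProduct_mulVec_le {c : ℝ} (hc : ∀ i, |hA.eigenvalues i| ≤ c) (x : ι → ℝ) :
    A *ᵥ x ⬝ᵥ A *ᵥ x ≤ c ^ 2 * (x ⬝ᵥ x) := by
  simp only [hA.eigenvectorBasis.dotProduct_eq_sum_repr, eigenvectorBasis_repr_mulVec, mul_sum]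
  refine sum_le_sum fun i _ => ?_
  have : hA.eigenvalues i ^ 2 ≤ c ^ 2 := sq_le_sq' (abs_le.1 (hc i)).1 (abs_le.1 (hc i)).2
  nlinarith [mul_self_nonneg (hA.eigenvectorBasis.repr (WithLp.toLp 2 x) i)]

end Matrix.IsHermitian

theorem SimpleGraph.adjMatrix_nonneg {V α : Type*} [Zero α] [One α] [Preorder α]
    [ZeroLEOneClass α] (G : SimpleGraph V) [DecidableRel G.Adj] (i j : V) :
    0 ≤ G.adjMatrix α i j := by
  rw [adjMatrix_apply]
  split_ifs
  exacts [zero_le_one, le_rfl]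

theorem lam_one_ge_sqrt_ratio_two_deg_general {n : ℕ} (G : SimpleGraph (Fin n)) [DecidableRel G.Adj]
    (lam1 : ℝ) (hlam : IsGreatest (Set.range (graphEigs G)) lam1) :
    lam1 ≥ Real.sqrt
      ((∑ i, (∑ j ∈ G.neighborFinset i, (G.degree j : ℝ)) ^ 2) /
        (∑ i, (G.degree i : ℝ) ^ 2)) := by
  have hA := adjHerm G
  have habs : ∀ i, |hA.eigenvalues i| ≤ lam1 :=
    hA.abs_eigenvalues_le_of_nonneg G.adjMatrix_nonneg fun i => hlam.2 ⟨i, rfl⟩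
  obtain ⟨i, -⟩ := hlam.1
  have hbound := hA.mulVec_dotProduct_mulVec_le habs fun i => (G.degree i : ℝ)
  simp only [dotProduct, SimpleGraph.adjMatrix_mulVec_apply, ← sq] at hbound
  rw [ge_iff_le, Real.sqrt_le_iff]
  exact ⟨(abs_nonneg _).trans (habs i), div_le_of_le_mul₀ (by positivity) (by positivity) hbound⟩

/-- For a connected simple graph `G`, with `d₂(i) = ∑_{j ∈ N(i)} d(j)`,
`λ₁ ≥ sqrt((∑ d₂(i)²)/(∑ d(i)²))`. -/
theorem lam_one_ge_sqrt_ratio_two_deg {n : ℕ} (G : SimpleGraph (Fin n)) [DecidableRel G.Adj]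
    (hconn : G.Connected) (lam1 : ℝ) (hlam : IsGreatest (Set.range (graphEigs G)) lam1) :
    lam1 ≥ Real.sqrt
      ((∑ i, (∑ j ∈ G.neighborFinset i, (G.degree j : ℝ)) ^ 2) /
        (∑ i, (G.degree i : ℝ) ^ 2)) :=
  lam_one_ge_sqrt_ratio_two_deg_general G lam1 hlam
end
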